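/- arXiv:1511.07526 — 6 statements merged into one kernel-verified Lean document; each statement's English description precedes it below -/
import Mathlib

section
/- Let A be an m×m real matrix and suppose there exist β̂ > 0 and λ̂ > 0 such that ‖exp(−t·A)‖ ≤ β̂·e^{−λ̂·t} for all t ≥ 0. Let 0 < λ < λ̂, Γ ≥ 0, let ξ : ℝ → ℝ^m be continuous with ‖ξ(s)‖ ≤ Γ·e^{−λ·s} for all s ≥ 0, and let η : ℝ → ℝ^m be differentiable with η′(t) = −A·η(t) + ξ(t) for all t ≥ 0. Then η(t) → 0 as t → ∞. -/
/-!
Variation of constants without integrals: for fixed `t`, the curve `ψ(s) = exp((s - t)A) η(s)`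
runs from `exp(-tA) η(0)` to `η(t)` and has derivative `exp((s - t)A) ξ(s)`, of norm at most
`β̂Γ e^{-λ̂(t-s) - λs} ≤ β̂Γ e^{-λt}` because `λ < λ̂`. The mean value inequality gives
`‖η(t)‖ ≤ β̂ e^{-λ̂t} ‖η(0)‖ + β̂Γ t e^{-λt}`, and both terms tend to `0`.
-/

open NormedSpace Filter Set Topology

theorem Matrix.toEuclideanCLM_exp {𝕜 n : Type*} [RCLike 𝕜] [Fintype n] [DecidableEq n]
    (A : Matrix n n 𝕜) :
    Matrix.toEuclideanCLM (𝕜 := 𝕜) (exp A) = exp (Matrix.toEuclideanCLM (𝕜 := 𝕜) A) := by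
  open scoped Matrix.Norms.L2Operator in
  exact map_exp_of_mem_ball (𝕂 := 𝕜) (Matrix.toEuclideanCLM (𝕜 := 𝕜) (n := n))
    (Matrix.toEuclideanCLM (𝕜 := 𝕜) (n := n)).toAlgEquiv.toLinearMap.continuous_of_finiteDimensional
    A ((expSeries_radius_eq_top 𝕜 (Matrix n n 𝕜)).symm ▸ edist_lt_top _ _)

section VariationOfConstants

variable {E : Type*} [NormedAddCommGroup E] [NormedSpace ℝ E] [CompleteSpace E] (L : E →L[ℝ] E)

theorem hasDerivAt_exp_sub_smul_apply (b : ℝ) {η : ℝ → E} {v : E} {s : ℝ}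
    (hη : HasDerivAt η (-L (η s) + v) s) :
    HasDerivAt (fun u ↦ exp ((u - b) • L) (η u)) (exp ((s - b) • L) v) s := by
  have hexp : HasDerivAt (fun u : ℝ ↦ exp ((u - b) • L)) (exp ((s - b) • L) * L) s :=
    (hasDerivAt_exp_smul_const L (s - b)).comp_sub_const s b
  convert hexp.clm_apply hη using 1
  simp only [mul_apply_eq_comp, map_add, map_neg]
  abel

theorem norm_sub_exp_smul_apply_le {ξ η : ℝ → E} {a b C : ℝ} (hab : a ≤ b)
    (hη : ∀ s ∈ Icc a b, HasDerivAt η (-L (η s) + ξ s) s)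
    (hC : ∀ s ∈ Ico a b, ‖exp ((s - b) • L) (ξ s)‖ ≤ C) :
    ‖η b - exp ((a - b) • L) (η a)‖ ≤ C * (b - a) := by
  simpa using norm_image_sub_le_of_norm_deriv_le_segment'
    (fun s hs ↦ (hasDerivAt_exp_sub_smul_apply L b (hη s hs)).hasDerivWithinAt) hC b ⟨hab, le_rfl⟩

theorem norm_le_of_hasDerivAt_neg_apply_add {ξ η : ℝ → E} {β lhat lam Γ t : ℝ}
    (hβ : 0 ≤ β) (hΓ : 0 ≤ Γ) (hlam : lam ≤ lhat)
    (hexp : ∀ t : ℝ, 0 ≤ t → ‖exp ((-t) • L)‖ ≤ β * Real.exp (-lhat * t))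
    (hξ : ∀ s : ℝ, 0 ≤ s → ‖ξ s‖ ≤ Γ * Real.exp (-lam * s))
    (hη : ∀ s : ℝ, 0 ≤ s → HasDerivAt η (-L (η s) + ξ s) s) (ht : 0 ≤ t) :
    ‖η t‖ ≤ β * ‖η 0‖ * Real.exp (-lhat * t) + β * Γ * (t * Real.exp (-lam * t)) := by
  have hforced (s : ℝ) (hs : s ∈ Ico 0 t) :
      ‖exp ((s - t) • L) (ξ s)‖ ≤ β * Γ * Real.exp (-lam * t) := by
    have hts : 0 ≤ t - s := sub_nonneg.2 hs.2.le
    have hβΓ : 0 ≤ β * Γ := mul_nonneg hβ hΓ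
    calc ‖exp ((s - t) • L) (ξ s)‖ ≤ ‖exp ((-(t - s)) • L)‖ * ‖ξ s‖ := by
          rw [neg_sub]; exact ContinuousLinearMap.le_opNorm _ _
      _ ≤ β * Real.exp (-lhat * (t - s)) * (Γ * Real.exp (-lam * s)) :=
          mul_le_mul (hexp _ hts) (hξ s hs.1) (norm_nonneg _) ((norm_nonneg _).trans (hexp _ hts))
      _ = β * Γ * Real.exp (-lhat * (t - s) + -lam * s) := by rw [Real.exp_add]; ring
      _ ≤ β * Γ * Real.exp (-lam * t) := by gcongr; nlinarith [hs.2]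
  have hduhamel := norm_sub_exp_smul_apply_le L ht (fun s hs ↦ hη s hs.1) hforced
  calc ‖η t‖ ≤ ‖exp ((0 - t) • L) (η 0)‖ + ‖η t - exp ((0 - t) • L) (η 0)‖ := norm_le_insert' _ _
    _ ≤ β * Real.exp (-lhat * t) * ‖η 0‖ + β * Γ * Real.exp (-lam * t) * (t - 0) := by
      gcongr
      rw [zero_sub]
      exact ContinuousLinearMap.le_of_opNorm_le _ (hexp t ht) _
    _ = _ := by ring

end VariationOfConstants

theorem perturbed_linear_system_tendsto_zero_general
    (m : ℕ) (A : Matrix (Fin m) (Fin m) ℝ)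
    (βhat lhat lam Γ : ℝ)
    (hβhat : 0 < βhat) (hlhat : 0 < lhat)
    (hexp : ∀ t : ℝ, 0 ≤ t →
      ‖Matrix.toEuclideanCLM (𝕜 := ℝ) (NormedSpace.exp ((-t) • A))‖
        ≤ βhat * Real.exp (-lhat * t))
    (hlam : 0 < lam) (hlamlt : lam < lhat) (hΓ : 0 ≤ Γ)
    (ξ η : ℝ → EuclideanSpace ℝ (Fin m))
    (hξ : ∀ s : ℝ, 0 ≤ s → ‖ξ s‖ ≤ Γ * Real.exp (-lam * s))
    (hη : ∀ t : ℝ, 0 ≤ t →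
      HasDerivAt η (-(Matrix.toEuclideanLin A (η t)) + ξ t) t) :
    Filter.Tendsto η Filter.atTop (nhds 0) := by
  set L := Matrix.toEuclideanCLM (𝕜 := ℝ) A
  have hexpL (t : ℝ) (ht : 0 ≤ t) : ‖exp ((-t) • L)‖ ≤ βhat * Real.exp (-lhat * t) := by
    simpa only [L, ← map_smul, ← Matrix.toEuclideanCLM_exp] using hexp t ht
  have hbound (t : ℝ) (ht : 0 ≤ t) :
      ‖η t‖ ≤ βhat * ‖η 0‖ * Real.exp (-lhat * t) + βhat * Γ * (t * Real.exp (-lam * t)) :=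
    norm_le_of_hasDerivAt_neg_apply_add L hβhat.le hΓ hlamlt.le hexpL hξ hη ht
  have hdecay : Tendsto (fun t ↦ βhat * ‖η 0‖ * Real.exp (-lhat * t)
      + βhat * Γ * (t * Real.exp (-lam * t))) atTop (𝓝 0) := by
    simpa using
      ((tendsto_rpow_mul_exp_neg_mul_atTop_nhds_zero 0 lhat hlhat).const_mul (βhat * ‖η 0‖)).add
      ((tendsto_rpow_mul_exp_neg_mul_atTop_nhds_zero 1 lam hlam).const_mul (βhat * Γ))
  exact squeeze_zero_norm' (eventually_atTop.2 ⟨0, hbound⟩) hdecay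

/-- If `‖exp(-t·A)‖ ≤ β̂·e^{-λ̂ t}` (operator norm induced by the Euclidean norm),
`0 < λ < λ̂`, `‖ξ(s)‖ ≤ Γ·e^{-λ s}` for `s ≥ 0` with `ξ` continuous, and
`η′(t) = -A·η(t) + ξ(t)` for `t ≥ 0`, then `η(t) → 0` as `t → ∞`. -/
theorem perturbed_linear_system_tendsto_zero
    (m : ℕ) (A : Matrix (Fin m) (Fin m) ℝ)
    (βhat lhat lam Γ : ℝ)
    (hβhat : 0 < βhat) (hlhat : 0 < lhat)
    (hexp : ∀ t : ℝ, 0 ≤ t →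
      ‖Matrix.toEuclideanCLM (𝕜 := ℝ) (NormedSpace.exp ((-t) • A))‖
        ≤ βhat * Real.exp (-lhat * t))
    (hlam : 0 < lam) (hlamlt : lam < lhat) (hΓ : 0 ≤ Γ)
    (ξ η : ℝ → EuclideanSpace ℝ (Fin m))
    (hξc : Continuous ξ)
    (hξ : ∀ s : ℝ, 0 ≤ s → ‖ξ s‖ ≤ Γ * Real.exp (-lam * s))
    (hη : ∀ t : ℝ, 0 ≤ t →
      HasDerivAt η (-(Matrix.toEuclideanLin A (η t)) + ξ t) t) :
    Filter.Tendsto η Filter.atTop (nhds 0) :=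
  perturbed_linear_system_tendsto_zero_general m A βhat lhat lam Γ hβhat hlhat hexp hlam hlamlt hΓ ξ
    η hξ hη
end

section
/- Let N ≥ 2 and let L be an N×N real matrix with zero row sums, i.e., L·1_N = 0. Write L in block form L = [[c, bᵀ],[a, M]] with c ∈ ℝ, b, a ∈ ℝ^{N−1}, and M an (N−1)×(N−1) matrix. Then the characteristic polynomial of L equals X times the characteristic polynomial of M − 1_{N−1}·bᵀ. In particular, the eigenvalues of M − 1_{N−1}·bᵀ are exactly the eigenvalues of L with one zero eigenvalue removed (counted with multiplicity). -/
/-!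
Since `L 1_N = 0`, conjugating `L` by the shear `P = [[1, 0], [1, I]]`, whose first column is
`1_N`, kills the first column: `P⁻¹ L P = [[0, bᵀ], [0, M - 1 bᵀ]]`. This is block upper
triangular, so its characteristic polynomial is `X · charpoly (M - 1 bᵀ)`.
-/

open Matrix Polynomial

namespace Matrix

variable {m n R : Type*} [Fintype m] [Fintype n] [DecidableEq m] [DecidableEq n] [CommRing R]

theorem fromBlocks_shear_mul_shear_neg (W : Matrix n m R) :
    fromBlocks 1 0 W 1 * fromBlocks 1 0 (-W) 1 = (1 : Matrix (m ⊕ n) (m ⊕ n) R) := by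
  simp [fromBlocks_multiply, ← fromBlocks_one]

theorem fromBlocks_shear_conj (c : Matrix m m R) (b : Matrix m n R) (a : Matrix n m R)
    (M : Matrix n n R) (W : Matrix n m R) :
    fromBlocks 1 0 (-W) 1 * fromBlocks c b a M * fromBlocks 1 0 W 1 =
      fromBlocks (c + b * W) b (a + M * W - W * (c + b * W)) (M - W * b) := by
  simp only [fromBlocks_multiply, Matrix.one_mul, Matrix.mul_one, Matrix.zero_mul,
    Matrix.mul_zero, add_zero, zero_add, Matrix.neg_mul, Matrix.mul_add, Matrix.add_mul,
    Matrix.mul_assoc]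
  congr 1 <;> abel

theorem charpoly_fromBlocks_of_mul_fromRows_eq_zero (c : Matrix m m R) (b : Matrix m n R)
    (a : Matrix n m R) (M : Matrix n n R) (W : Matrix n m R)
    (h : fromBlocks c b a M * fromRows (1 : Matrix m m R) W = 0) :
    (fromBlocks c b a M).charpoly = X ^ Fintype.card m * (M - W * b).charpoly := by
  rw [fromBlocks_mul_fromRows, ← fromRows_zero] at h
  obtain ⟨htop, hbot⟩ := fromRows_inj h
  rw [Matrix.mul_one] at htop hbot
  calc (fromBlocks c b a M).charpoly
      = (fromBlocks 1 0 (-W) 1 * fromBlocks c b a M * fromBlocks 1 0 W 1).charpoly := by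
        rw [charpoly_mul_comm, ← Matrix.mul_assoc, fromBlocks_shear_mul_shear_neg,
          Matrix.one_mul]
    _ = X ^ Fintype.card m * (M - W * b).charpoly := by
        rw [fromBlocks_shear_conj, htop, hbot, Matrix.mul_zero, sub_zero,
          charpoly_fromBlocks_zero₂₁, charpoly_zero]

end Matrix

theorem laplacian_charpoly_factor_general
    (k : ℕ)
    (L : Matrix (Fin 1 ⊕ Fin k) (Fin 1 ⊕ Fin k) ℝ)
    (hrow : L.mulVec (fun _ => (1:ℝ)) = 0)
    (c : Matrix (Fin 1) (Fin 1) ℝ) (b : Matrix (Fin 1) (Fin k) ℝ)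
    (a : Matrix (Fin k) (Fin 1) ℝ) (M : Matrix (Fin k) (Fin k) ℝ)
    (hL : L = Matrix.fromBlocks c b a M) :
    Matrix.charpoly L
      = Polynomial.X * Matrix.charpoly (M - (Matrix.of fun _ _ => (1:ℝ)) * b) := by
  set W : Matrix (Fin k) (Fin 1) ℝ := of fun _ _ => 1
  have hones : fromRows (1 : Matrix (Fin 1) (Fin 1) ℝ) W = replicateCol (Fin 1) (fun _ => 1) := by
    ext (i | i) j
    · simp [Subsingleton.elim i j]
    · simp [W]
  have hker : L * fromRows (1 : Matrix (Fin 1) (Fin 1) ℝ) W = 0 := by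
    rw [hones, ← replicateCol_mulVec, hrow, replicateCol_zero]
  subst hL
  rw [charpoly_fromBlocks_of_mul_fromRows_eq_zero c b a M W hker, Fintype.card_fin, pow_one]
  -- the statement's `1 * b` elaborates through the `CStarMatrix` multiplication instance
  rfl

/-- For an `N×N` matrix `L` with zero row sums, written in block form
`L = [[c, bᵀ],[a, M]]`, the characteristic polynomial of `L` equals `X` times the
characteristic polynomial of `M - 1·bᵀ`, where `1·bᵀ` is the rank-one matrix whose
`(i,j)` entry is `b j`. -/
theorem laplacian_charpoly_factor
    (k : ℕ) (hk : 1 ≤ k)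
    (L : Matrix (Fin 1 ⊕ Fin k) (Fin 1 ⊕ Fin k) ℝ)
    (hrow : L.mulVec (fun _ => (1:ℝ)) = 0)
    (c : Matrix (Fin 1) (Fin 1) ℝ) (b : Matrix (Fin 1) (Fin k) ℝ)
    (a : Matrix (Fin k) (Fin 1) ℝ) (M : Matrix (Fin k) (Fin k) ℝ)
    (hL : L = Matrix.fromBlocks c b a M) :
    Matrix.charpoly L
      = Polynomial.X * Matrix.charpoly (M - (Matrix.of fun _ _ => (1:ℝ)) * b) :=
  laplacian_charpoly_factor_general k L hrow c b a M hL
end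

section
/- Let x : ℝ → ℝⁿ, let β > 0, λ > 0, let ρ ≥ 1 be an integer, let 0 ≤ τ ≤ δ̄, and let s₀ < s₁ < … < s_ρ be real numbers such that s_μ − s₀ ≥ μ·τ for μ = 1,…,ρ and s_ρ − s₀ ≤ ρ·δ̄. Suppose that for each μ = 0,…,ρ−1 and every t ∈ [s_μ, s_{μ+1}], ‖x(s_μ) − x(t)‖ ≤ β·e^{−λ·t}. Then for every t ∈ [s₀, s_ρ], ‖x(s₀) − x(t)‖ ≤ γ_l·e^{−λ·t}, where γ_l = β·e^{ρ·λ·δ̄}·∑_{μ=1}^{ρ} e^{−μ·λ·τ} (bound on the state error seen by a neighbor under up to ρ−1 consecutive packet dropouts). -/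
/-!
Chaining the threshold condition through the dropped broadcasts with the triangle inequality
gives `‖x(s₀) - x(t)‖ ≤ β ∑_{j=1}^{ρ-1} e^{-λ s_j} + β e^{-λ t}`. Each summand is then traded
for `e^{-λ t}`: since `t ≤ s_ρ ≤ s₀ + ρ δ̄` and `s_j ≥ s₀ + j τ`, we have
`e^{-λ s_j} ≤ e^{ρλδ̄} e^{-jλτ} e^{-λ t}`, and the last term is absorbed as the `j = ρ` summand
using `τ ≤ δ̄`.
-/

open Finset

theorem le_of_forall_lt_le_succ {α : Type*} [Preorder α] {f : ℕ → α} {k : ℕ}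
    (h : ∀ μ < k, f μ ≤ f (μ + 1)) : f 0 ≤ f k := by
  induction k with
  | zero => rfl
  | succ k ih => exact (ih fun μ hμ => h μ (by omega)).trans (h k k.lt_succ_self)

theorem dist_le_sum_of_chain {ι α : Type*} [LinearOrder ι] [PseudoMetricSpace α]
    (x : ι → α) (s : ℕ → ι) (b : ι → ℝ) (k : ℕ)
    (hmono : ∀ μ ≤ k, s μ ≤ s (μ + 1))
    (hstep : ∀ μ ≤ k, ∀ t ∈ Set.Icc (s μ) (s (μ + 1)), dist (x (s μ)) (x t) ≤ b t) :
    ∀ t ∈ Set.Icc (s 0) (s (k + 1)),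
      dist (x (s 0)) (x t) ≤ ∑ j ∈ Icc 1 k, b (s j) + b t := by
  induction k with
  | zero => simpa using hstep 0 le_rfl
  | succ k ih =>
    have ih := ih (fun μ hμ => hmono μ (by omega)) (fun μ hμ => hstep μ (by omega))
    have hsum : ∑ j ∈ Icc 1 (k + 1), b (s j) = ∑ j ∈ Icc 1 k, b (s j) + b (s (k + 1)) :=
      sum_Icc_succ_top (by omega) _
    intro t ⟨ht₀, ht⟩
    rcases le_or_gt t (s (k + 1)) with hle | hgt
    · have hb : 0 ≤ b (s (k + 1)) :=
        (dist_self _).ge.trans (hstep (k + 1) le_rfl _ ⟨le_rfl, hmono (k + 1) le_rfl⟩)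
      linarith [ih t ⟨ht₀, hle⟩]
    · have h₀ : s 0 ≤ s (k + 1) := le_of_forall_lt_le_succ fun μ hμ => hmono μ (by omega)
      calc dist (x (s 0)) (x t)
          ≤ dist (x (s 0)) (x (s (k + 1))) + dist (x (s (k + 1))) (x t) := dist_triangle _ _ _
        _ ≤ (∑ j ∈ Icc 1 k, b (s j) + b (s (k + 1))) + b t :=
          add_le_add (ih _ ⟨h₀, le_rfl⟩) (hstep (k + 1) le_rfl t ⟨hgt.le, ht⟩)
        _ = ∑ j ∈ Icc 1 (k + 1), b (s j) + b t := by rw [hsum]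

theorem Real.exp_neg_mul_le_exp_mul_exp_mul_exp {lam : ℝ} (hlam : 0 ≤ lam) {u t a b : ℝ}
    (h : t + b ≤ u + a) :
    Real.exp (-lam * u) ≤ Real.exp (lam * a) * Real.exp (-lam * b) * Real.exp (-lam * t) := by
  rw [← Real.exp_add, ← Real.exp_add, Real.exp_le_exp]
  nlinarith

theorem dropout_error_bound_general
    (n : ℕ) (x : ℝ → EuclideanSpace ℝ (Fin n))
    (β lam : ℝ) (hβ : 0 < β) (hlam : 0 < lam)
    (ρ : ℕ) (hρ : 1 ≤ ρ)
    (τ δbar : ℝ) (hτδ : τ ≤ δbar)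
    (s : ℕ → ℝ)
    (hmono : ∀ μ : ℕ, μ < ρ → s μ < s (μ + 1))
    (hlow : ∀ μ : ℕ, 1 ≤ μ → μ ≤ ρ → (μ : ℝ) * τ ≤ s μ - s 0)
    (hup : s ρ - s 0 ≤ (ρ : ℝ) * δbar)
    (hthr : ∀ μ : ℕ, μ < ρ → ∀ t ∈ Set.Icc (s μ) (s (μ + 1)),
      ‖x (s μ) - x t‖ ≤ β * Real.exp (-lam * t)) :
    ∀ t ∈ Set.Icc (s 0) (s ρ),
      ‖x (s 0) - x t‖
        ≤ (β * Real.exp ((ρ : ℝ) * lam * δbar)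
            * ∑ μ ∈ Finset.Icc 1 ρ, Real.exp (-(μ : ℝ) * lam * τ))
          * Real.exp (-lam * t) := by
  obtain ⟨k, rfl⟩ : ∃ k, ρ = k + 1 := ⟨ρ - 1, by omega⟩
  intro t ht
  have hchain := dist_le_sum_of_chain x s (fun u => β * Real.exp (-lam * u)) k
    (fun μ hμ => (hmono μ (by omega)).le)
    (fun μ hμ u hu => by simpa only [dist_eq_norm] using hthr μ (by omega) u hu) t ht
  rw [dist_eq_norm] at hchain
  have hexp {u a b : ℝ} (h : t + b * τ ≤ u + a * δbar) :
      Real.exp (-lam * u)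
        ≤ Real.exp (a * lam * δbar) * Real.exp (-b * lam * τ) * Real.exp (-lam * t) := by
    convert Real.exp_neg_mul_le_exp_mul_exp_mul_exp hlam.le h using 3 <;> ring_nf
  calc ‖x (s 0) - x t‖
      ≤ ∑ j ∈ Icc 1 k, β * Real.exp (-lam * s j) + β * Real.exp (-lam * t) := hchain
    _ ≤ ∑ j ∈ Icc 1 k, β * (Real.exp (((k + 1 : ℕ) : ℝ) * lam * δbar)
            * Real.exp (-(j : ℝ) * lam * τ) * Real.exp (-lam * t))
        + β * (Real.exp (((k + 1 : ℕ) : ℝ) * lam * δbar)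
            * Real.exp (-((k + 1 : ℕ) : ℝ) * lam * τ) * Real.exp (-lam * t)) := by
      gcongr with j hj
      · obtain ⟨hj₁, hjk⟩ := mem_Icc.1 hj
        have := hlow j hj₁ (hjk.trans k.le_succ)
        exact hexp (by linarith [ht.2])
      · exact hexp (by gcongr)
    _ = _ := by
      rw [sum_Icc_succ_top (by omega), mul_add, add_mul, mul_sum, sum_mul]
      congr 1
      · exact sum_congr rfl fun _ _ => by ring
      · ring

/-- Bound on the state error seen by a neighbor under up to `ρ-1` consecutive packet
dropouts: if events at times `s₀ < s₁ < … < s_ρ` satisfy `s_μ - s₀ ≥ μτ` and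
`s_ρ - s₀ ≤ ρδ̄`, and between consecutive events the local error satisfies the
threshold `‖x(s_μ) - x(t)‖ ≤ β e^{-λ t}`, then for every `t ∈ [s₀, s_ρ]` we have
`‖x(s₀) - x(t)‖ ≤ γ_l e^{-λ t}` with `γ_l = β e^{ρλδ̄} ∑_{μ=1}^{ρ} e^{-μλτ}`. -/
theorem dropout_error_bound
    (n : ℕ) (x : ℝ → EuclideanSpace ℝ (Fin n))
    (β lam : ℝ) (hβ : 0 < β) (hlam : 0 < lam)
    (ρ : ℕ) (hρ : 1 ≤ ρ)
    (τ δbar : ℝ) (hτ : 0 ≤ τ) (hτδ : τ ≤ δbar)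
    (s : ℕ → ℝ)
    (hmono : ∀ μ : ℕ, μ < ρ → s μ < s (μ + 1))
    (hlow : ∀ μ : ℕ, 1 ≤ μ → μ ≤ ρ → (μ : ℝ) * τ ≤ s μ - s 0)
    (hup : s ρ - s 0 ≤ (ρ : ℝ) * δbar)
    (hthr : ∀ μ : ℕ, μ < ρ → ∀ t ∈ Set.Icc (s μ) (s (μ + 1)),
      ‖x (s μ) - x t‖ ≤ β * Real.exp (-lam * t)) :
    ∀ t ∈ Set.Icc (s 0) (s ρ),
      ‖x (s 0) - x t‖
        ≤ (β * Real.exp ((ρ : ℝ) * lam * δbar)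
            * ∑ μ ∈ Finset.Icc 1 ρ, Real.exp (-(μ : ℝ) * lam * τ))
          * Real.exp (-lam * t) :=
  dropout_error_bound_general n x β lam hβ hlam ρ hρ τ δbar hτδ s hmono hlow hup hthr
end

section
/- Let 0 < λ < λ̂, H₁ > 0, H₂ > 0, β > 0, and t_k ≥ 0, and define τ = (1/λ̂)·ln(1 + β/(H₂/λ + (H₁/λ̂)·e^{(λ−λ̂)·t_k})). Then τ > 0 and (H₁/λ̂)·(1 − e^{−λ̂·τ})·e^{−λ̂·t_k} + (H₂/λ)·(1 − e^{−λ·τ})·e^{−λ·t_k} ≤ β·e^{−λ·(t_k+τ)}. -/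
/-!
With `A = H₂/λ + (H₁/λ̂)e^{(λ-λ̂)t_k}` the choice of `τ` means `e^{λ̂τ} = 1 + β/A`, i.e. the
balance `(1 - e^{-λ̂τ}) A = β e^{-λ̂τ}`. Factoring out `e^{-λ t_k}`, the left-hand side is at most
`e^{-λ t_k} (1 - e^{-λ̂τ}) A` because `e^{-λ̂τ} ≤ e^{-λτ}`, and the balance together with the same
comparison bounds this by `β e^{-λ t_k} e^{-λτ}`.
-/

open Real

lemma one_sub_exp_neg_mul_eq_of_exp_eq {c τ A β : ℝ} (hA : A ≠ 0)
    (h : exp (c * τ) = 1 + β / A) :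
    (1 - exp (-c * τ)) * A = β * exp (-c * τ) := by
  have hx : (A + β) / A ≠ 0 := one_add_div hA ▸ h ▸ (exp_pos _).ne'
  have hAβ : A + β ≠ 0 := (div_ne_zero_iff.1 hx).1
  rw [neg_mul, exp_neg, h, one_add_div hA, inv_div]
  field_simp
  ring

lemma exp_neg_mul_le_exp_neg_mul {a b t : ℝ} (hab : a ≤ b) (ht : 0 ≤ t) :
    exp (-b * t) ≤ exp (-a * t) :=
  exp_le_exp.2 (by nlinarith)

theorem inter_event_time_bound_general
    (lam lhat H₁ H₂ β tk : ℝ)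
    (hlam : 0 < lam) (hlamlt : lam < lhat)
    (hH₁ : 0 < H₁) (hH₂ : 0 < H₂) (hβ : 0 < β)
    (τ : ℝ)
    (hτ : τ = (1 / lhat)
      * Real.log (1 + β / (H₂ / lam + (H₁ / lhat) * Real.exp ((lam - lhat) * tk)))) :
    0 < τ ∧
      (H₁ / lhat) * (1 - Real.exp (-lhat * τ)) * Real.exp (-lhat * tk)
        + (H₂ / lam) * (1 - Real.exp (-lam * τ)) * Real.exp (-lam * tk)
        ≤ β * Real.exp (-lam * (tk + τ)) := by
  have hlhat : 0 < lhat := hlam.trans hlamlt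
  set A := H₂ / lam + (H₁ / lhat) * exp ((lam - lhat) * tk) with hA_def
  have hA : 0 < A := by positivity
  have hratio : 1 < 1 + β / A := lt_add_of_pos_right 1 (div_pos hβ hA)
  have hτpos : 0 < τ := hτ ▸ mul_pos (one_div_pos.2 hlhat) (log_pos hratio)
  have hexp : exp (lhat * τ) = 1 + β / A := by
    rw [hτ, ← mul_assoc, mul_one_div_cancel hlhat.ne', one_mul, exp_log (by linarith)]
  have hbalance := one_sub_exp_neg_mul_eq_of_exp_eq hA.ne' hexp
  have hEF := exp_neg_mul_le_exp_neg_mul hlamlt.le hτpos.le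
  have hsplit : exp (-lhat * tk) = exp (-lam * tk) * exp ((lam - lhat) * tk) := by
    rw [← exp_add]; ring_nf
  refine ⟨hτpos, ?_⟩
  calc (H₁ / lhat) * (1 - exp (-lhat * τ)) * exp (-lhat * tk)
        + (H₂ / lam) * (1 - exp (-lam * τ)) * exp (-lam * tk)
      = exp (-lam * tk) * ((H₁ / lhat) * (1 - exp (-lhat * τ)) * exp ((lam - lhat) * tk)
          + (H₂ / lam) * (1 - exp (-lam * τ))) := by rw [hsplit]; ring
    _ ≤ exp (-lam * tk) * ((H₁ / lhat) * (1 - exp (-lhat * τ)) * exp ((lam - lhat) * tk)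
          + (H₂ / lam) * (1 - exp (-lhat * τ))) := by gcongr
    _ = exp (-lam * tk) * ((1 - exp (-lhat * τ)) * A) := by rw [hA_def]; ring
    _ = exp (-lam * tk) * (β * exp (-lhat * τ)) := by rw [hbalance]
    _ ≤ exp (-lam * tk) * (β * exp (-lam * τ)) := by gcongr
    _ = β * exp (-lam * (tk + τ)) := by
      rw [mul_add, exp_add]; ring

/-- The inter-event time lower bound
`τ = (1/λ̂)·ln(1 + β/(H₂/λ + (H₁/λ̂)e^{(λ-λ̂)t_k}))` is positive and satisfies
`(H₁/λ̂)(1 - e^{-λ̂τ})e^{-λ̂t_k} + (H₂/λ)(1 - e^{-λτ})e^{-λt_k} ≤ β e^{-λ(t_k+τ)}`. -/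
theorem inter_event_time_bound
    (lam lhat H₁ H₂ β tk : ℝ)
    (hlam : 0 < lam) (hlamlt : lam < lhat)
    (hH₁ : 0 < H₁) (hH₂ : 0 < H₂) (hβ : 0 < β) (htk : 0 ≤ tk)
    (τ : ℝ)
    (hτ : τ = (1 / lhat)
      * Real.log (1 + β / (H₂ / lam + (H₁ / lhat) * Real.exp ((lam - lhat) * tk)))) :
    0 < τ ∧
      (H₁ / lhat) * (1 - Real.exp (-lhat * τ)) * Real.exp (-lhat * tk)
        + (H₂ / lam) * (1 - Real.exp (-lam * τ)) * Real.exp (-lam * tk)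
        ≤ β * Real.exp (-lam * (tk + τ)) :=
  inter_event_time_bound_general lam lhat H₁ H₂ β tk hlam hlamlt hH₁ hH₂ hβ τ hτ
end

section
/- Let 0 < λ < λ̂, H₁ > 0, H₂ > 0, β > 0, and t_k ≥ 0, and define τ = (1/λ̂)·ln(1 + β/(H₂/λ + (H₁/λ̂)·e^{(λ−λ̂)·t_k})). Let e : ℝ → ℝⁿ be differentiable on [t_k, t_k+τ] with e(t_k) = 0 and ‖e′(s)‖ ≤ H₁·e^{−λ̂·s} + H₂·e^{−λ·s} for all s ∈ [t_k, t_k+τ]. Then ‖e(t)‖ ≤ β·e^{−λ·t} for every t ∈ [t_k, t_k+τ]; that is, the local state error stays below the event-triggering threshold for at least time τ after each event. -/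
/-!
Integrating the derivative bound from the event time `t_k` gives
`‖e t‖ ≤ B t := H₁ ∫ e^{-λ̂ s} ds + H₂ ∫ e^{-λ s} ds` over `[t_k, t]`. Factoring out `e^{-λ t_k}`
and using `e^{-λ̂ u} ≤ e^{-λ u}` for `u = t - t_k ≥ 0`, the estimate `B t ≤ β e^{-λ t}` reduces to
`A (1 - e^{-λ̂ u}) ≤ β e^{-λ̂ u}` with `A = H₂/λ + (H₁/λ̂) e^{(λ-λ̂) t_k}`, that is, to
`e^{λ̂ u} ≤ 1 + β / A`, which is exactly the condition `u ≤ τ`.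
-/

open Real Set

/-- `∫ s in a..t, exp (-c * s)` in closed form (for `c ≠ 0`). -/
noncomputable def expDecayIntegral (c a t : ℝ) : ℝ :=
  (exp (-c * a) - exp (-c * t)) / c

lemma hasDerivAt_expDecayIntegral {c : ℝ} (hc : c ≠ 0) (a t : ℝ) :
    HasDerivAt (expDecayIntegral c a) (exp (-c * t)) t := by
  refine ((((hasDerivAt_id t).const_mul (-c)).exp.const_sub (exp (-c * a))).div_const c
    ).congr_deriv ?_
  simp [hc]

lemma expDecayIntegral_self (c a : ℝ) : expDecayIntegral c a a = 0 := by
  simp [expDecayIntegral]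

lemma expDecayIntegral_add (c a u : ℝ) :
    expDecayIntegral c a (a + u) = exp (-c * a) * (1 - exp (-c * u)) / c := by
  rw [expDecayIntegral, mul_add, exp_add]
  ring

lemma norm_le_of_norm_deriv_le_exp_sum {E : Type*} [NormedAddCommGroup E] [NormedSpace ℝ E]
    {f f' : ℝ → E} {a b c₁ c₂ H₁ H₂ : ℝ} (hc₁ : c₁ ≠ 0) (hc₂ : c₂ ≠ 0) (hfa : f a = 0)
    (hf : ∀ s ∈ Icc a b, HasDerivWithinAt f (f' s) (Icc a b) s)
    (hbound : ∀ s ∈ Ico a b, ‖f' s‖ ≤ H₁ * exp (-c₁ * s) + H₂ * exp (-c₂ * s)) :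
    ∀ t ∈ Icc a b, ‖f t‖ ≤ H₁ * expDecayIntegral c₁ a t + H₂ * expDecayIntegral c₂ a t :=
  image_norm_le_of_norm_deriv_right_le_deriv_boundary
    (fun s hs => (hf s hs).continuousWithinAt)
    (fun s hs => (hf s (Ico_subset_Icc_self hs)).mono_of_mem_nhdsWithin
      (Icc_mem_nhdsGE_of_mem hs))
    (by simp [hfa, expDecayIntegral_self])
    (fun s => ((hasDerivAt_expDecayIntegral hc₁ a s).const_mul H₁).add
      ((hasDerivAt_expDecayIntegral hc₂ a s).const_mul H₂))
    hbound

lemma mul_one_sub_exp_neg_le_of_le_log {A β x : ℝ} (hA : 0 ≤ A) (hβ : 0 ≤ β)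
    (hx : x ≤ log (1 + β / A)) : A * (1 - exp (-x)) ≤ β * exp (-x) := by
  rcases hA.eq_or_lt with rfl | hA
  · simpa using mul_nonneg hβ (exp_pos (-x)).le
  have hexp : A * exp x ≤ A + β := by
    have := exp_le_exp.2 hx
    rw [exp_log (by positivity)] at this
    calc A * exp x ≤ A * (1 + β / A) := mul_le_mul_of_nonneg_left this hA.le
      _ = A + β := by field_simp
  have hinv : exp x * exp (-x) = 1 := by rw [← exp_add, add_neg_cancel, exp_zero]
  nlinarith [mul_le_mul_of_nonneg_right hexp (exp_pos (-x)).le]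

lemma exp_decay_barrier_le_threshold {lam lhat H₁ H₂ β a t : ℝ} (hlam : 0 < lam)
    (hlamlt : lam < lhat) (hH₁ : 0 ≤ H₁) (hH₂ : 0 ≤ H₂) (hβ : 0 ≤ β) (hat : a ≤ t)
    (ht : lhat * (t - a) ≤ log (1 + β / (H₂ / lam + H₁ / lhat * exp ((lam - lhat) * a)))) :
    H₁ * expDecayIntegral lhat a t + H₂ * expDecayIntegral lam a t ≤ β * exp (-lam * t) := by
  have hlhat : 0 < lhat := hlam.trans hlamlt
  obtain ⟨u, hu, rfl⟩ : ∃ u, 0 ≤ u ∧ t = a + u := ⟨t - a, by linarith, by ring⟩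
  set A := H₂ / lam + H₁ / lhat * exp ((lam - lhat) * a)
  have hexp_a : exp (-lhat * a) = exp (-lam * a) * exp ((lam - lhat) * a) := by
    rw [← exp_add]; ring_nf
  have hdecay : exp (-lhat * u) ≤ exp (-lam * u) := exp_le_exp.2 (by nlinarith)
  have hkey : A * (1 - exp (-lhat * u)) ≤ β * exp (-lhat * u) := by
    rw [neg_mul]
    exact mul_one_sub_exp_neg_le_of_le_log (by positivity) hβ (by simpa using ht)
  rw [expDecayIntegral_add, expDecayIntegral_add, hexp_a, mul_add, exp_add]
  calc H₁ * (exp (-lam * a) * exp ((lam - lhat) * a) * (1 - exp (-lhat * u)) / lhat)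
        + H₂ * (exp (-lam * a) * (1 - exp (-lam * u)) / lam)
      ≤ H₁ * (exp (-lam * a) * exp ((lam - lhat) * a) * (1 - exp (-lhat * u)) / lhat)
        + H₂ * (exp (-lam * a) * (1 - exp (-lhat * u)) / lam) := by gcongr
    _ = exp (-lam * a) * (A * (1 - exp (-lhat * u))) := by ring
    _ ≤ exp (-lam * a) * (β * exp (-lam * u)) :=
        mul_le_mul_of_nonneg_left (hkey.trans (by gcongr)) (exp_pos _).le
    _ = β * (exp (-lam * a) * exp (-lam * u)) := by ring

theorem error_below_threshold_until_tau_general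
    (n : ℕ) (lam lhat H₁ H₂ β tk : ℝ)
    (hlam : 0 < lam) (hlamlt : lam < lhat)
    (hH₁ : 0 < H₁) (hH₂ : 0 < H₂) (hβ : 0 < β)
    (τ : ℝ)
    (hτ : τ = (1 / lhat)
      * Real.log (1 + β / (H₂ / lam + (H₁ / lhat) * Real.exp ((lam - lhat) * tk))))
    (e e' : ℝ → EuclideanSpace ℝ (Fin n))
    (hzero : e tk = 0)
    (hderiv : ∀ s ∈ Set.Icc tk (tk + τ),
      HasDerivWithinAt e (e' s) (Set.Icc tk (tk + τ)) s)
    (hbound : ∀ s ∈ Set.Icc tk (tk + τ),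
      ‖e' s‖ ≤ H₁ * Real.exp (-lhat * s) + H₂ * Real.exp (-lam * s)) :
    ∀ t ∈ Set.Icc tk (tk + τ), ‖e t‖ ≤ β * Real.exp (-lam * t) := by
  have hlhat : 0 < lhat := hlam.trans hlamlt
  intro t ht
  have ht_le_tau : lhat * (t - tk) ≤ lhat * τ := by gcongr; linarith [ht.2]
  rw [hτ, ← mul_assoc, mul_one_div_cancel hlhat.ne', one_mul] at ht_le_tau
  calc ‖e t‖ ≤ H₁ * expDecayIntegral lhat tk t + H₂ * expDecayIntegral lam tk t :=
        norm_le_of_norm_deriv_le_exp_sum hlhat.ne' hlam.ne' hzero hderiv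
          (fun s hs => hbound s (Ico_subset_Icc_self hs)) t ht
    _ ≤ β * exp (-lam * t) :=
        exp_decay_barrier_le_threshold hlam hlamlt hH₁.le hH₂.le hβ.le ht.1 ht_le_tau

/-- After an event at time `t_k`, the local state error (reset to zero at `t_k`, with
derivative bounded by `H₁ e^{-λ̂ s} + H₂ e^{-λ s}`) stays below the event-triggering
threshold `β e^{-λ t}` for at least
`τ = (1/λ̂)·ln(1 + β/(H₂/λ + (H₁/λ̂)e^{(λ-λ̂)t_k}))` time units. -/
theorem error_below_threshold_until_tau
    (n : ℕ) (lam lhat H₁ H₂ β tk : ℝ)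
    (hlam : 0 < lam) (hlamlt : lam < lhat)
    (hH₁ : 0 < H₁) (hH₂ : 0 < H₂) (hβ : 0 < β) (htk : 0 ≤ tk)
    (τ : ℝ)
    (hτ : τ = (1 / lhat)
      * Real.log (1 + β / (H₂ / lam + (H₁ / lhat) * Real.exp ((lam - lhat) * tk))))
    (e e' : ℝ → EuclideanSpace ℝ (Fin n))
    (hzero : e tk = 0)
    (hderiv : ∀ s ∈ Set.Icc tk (tk + τ),
      HasDerivWithinAt e (e' s) (Set.Icc tk (tk + τ)) s)
    (hbound : ∀ s ∈ Set.Icc tk (tk + τ),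
      ‖e' s‖ ≤ H₁ * Real.exp (-lhat * s) + H₂ * Real.exp (-lam * s)) :
    ∀ t ∈ Set.Icc tk (tk + τ), ‖e t‖ ≤ β * Real.exp (-lam * t) :=
  error_below_threshold_until_tau_general n lam lhat H₁ H₂ β tk hlam hlamlt hH₁ hH₂ hβ τ hτ e e'
    hzero hderiv hbound
end

section
/- Let 0 < λ < λ̂, H₁ > 0, H₂ > 0, γ_d > 0, and t′ ≥ 0, and define d = (1/λ̂)·ln(1 + γ_d/(H₂/λ + (H₁/λ̂)·e^{(λ−λ̂)·t′})). Let e : ℝ → ℝⁿ be differentiable on [t′, t′+d] with e(t′) = 0 and ‖e′(s)‖ ≤ H₁·e^{−λ̂·s} + H₂·e^{−λ·s} for all s ∈ [t′, t′+d]. Then d > 0 and ‖e(t)‖ ≤ γ_d·e^{−λ·t} for every t ∈ [t′, t′+d]; that is, any communication delay not exceeding d keeps the delay-induced state error below γ_d·e^{−λ·t}. -/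
/-!
The error is bounded by the integral of its derivative bound,
`∫_{t'}^t (H₁ e^{-λ̂ s} + H₂ e^{-λ s}) ds`. Multiplying by `e^{λ t}` and writing `u = t - t'`,
both exponential terms grow in `u` no faster than `e^{λ̂ u} - 1`, so the integral is at most
`e^{-λ t} (H₂/λ + (H₁/λ̂) e^{(λ-λ̂) t'}) (e^{λ̂ d} - 1)`, and `d` is exactly the delay for which
this equals `γ_d e^{-λ t}`.
-/

open Real Set

theorem norm_le_norm_add_sub_of_norm_deriv_le {E : Type*} [NormedAddCommGroup E]
    [NormedSpace ℝ E] {f f' : ℝ → E} {B B' : ℝ → ℝ} {a b : ℝ}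
    (hf : ∀ s ∈ Icc a b, HasDerivWithinAt f (f' s) (Icc a b) s)
    (hB : ∀ s, HasDerivAt B (B' s) s) (bound : ∀ s ∈ Icc a b, ‖f' s‖ ≤ B' s) :
    ∀ t ∈ Icc a b, ‖f t‖ ≤ ‖f a‖ + (B t - B a) := by
  refine fun t ht => image_norm_le_of_norm_deriv_right_le_deriv_boundary
    (fun x hx => (hf x hx).continuousWithinAt)
    (fun x hx => (hf x (Ico_subset_Icc_self hx)).mono_of_mem_nhdsWithin
      (Icc_mem_nhdsGE_of_mem hx))
    (B := fun x => ‖f a‖ + (B x - B a)) (by simp)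
    (fun x => ((hB x).sub_const (B a)).const_add ‖f a‖)
    (fun s hs => bound s (Ico_subset_Icc_self hs)) ht

noncomputable def expDecayPrimitive (H₁ H₂ lam lhat s : ℝ) : ℝ :=
  -(H₁ / lhat * exp (-lhat * s) + H₂ / lam * exp (-lam * s))

theorem hasDerivAt_expDecayPrimitive {H₁ H₂ lam lhat : ℝ} (hlam : lam ≠ 0) (hlhat : lhat ≠ 0)
    (s : ℝ) :
    HasDerivAt (expDecayPrimitive H₁ H₂ lam lhat)
      (H₁ * exp (-lhat * s) + H₂ * exp (-lam * s)) s := by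
  have hexp (c : ℝ) : HasDerivAt (fun s => exp (-c * s)) (exp (-c * s) * -c) s :=
    ((hasDerivAt_id s).const_mul (-c)).exp.congr_deriv (by simp)
  refine (((hexp lhat).const_mul (H₁ / lhat)).add ((hexp lam).const_mul (H₂ / lam))).neg
    |>.congr_deriv ?_
  field_simp
  ring

theorem exp_neg_mul_sub_exp_neg_mul_le {c lam lhat t' t : ℝ} (hc : c ≤ lhat)
    (hlam : lam ≤ lhat) (hlhat : 0 ≤ lhat) (ht : t' ≤ t) :
    exp (-c * t') - exp (-c * t)
      ≤ exp (-lam * t) * exp ((lam - c) * t') * (exp (lhat * (t - t')) - 1) := by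
  obtain ⟨u, hu, rfl⟩ : ∃ u, 0 ≤ u ∧ t = t' + u := ⟨t - t', by linarith, by ring⟩
  have hdecay : 1 - exp (-c * u) ≤ 1 - exp (-lhat * u) := by gcongr
  have hgrowth : 1 ≤ exp ((lhat - lam) * u) := one_le_exp (by nlinarith)
  have hpos : 0 ≤ 1 - exp (-lhat * u) := by
    rw [sub_nonneg]; exact exp_le_one_iff.2 (by nlinarith)
  calc exp (-c * t') - exp (-c * (t' + u)) = exp (-c * t') * (1 - exp (-c * u)) := by
        rw [mul_add, exp_add]; ring
    _ ≤ exp (-c * t') * (exp ((lhat - lam) * u) * (1 - exp (-lhat * u))) := by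
        gcongr; nlinarith
    _ = _ := by
        simp only [← exp_add, mul_sub, mul_one, add_sub_cancel_left]
        ring_nf

theorem expDecayPrimitive_sub_le {H₁ H₂ lam lhat γd t' d t : ℝ} (hH₁ : 0 ≤ H₁) (hH₂ : 0 ≤ H₂)
    (hlam : 0 < lam) (hlamlt : lam ≤ lhat)
    (hd : (H₂ / lam + H₁ / lhat * exp ((lam - lhat) * t')) * (exp (lhat * d) - 1) ≤ γd)
    (ht : t ∈ Icc t' (t' + d)) :
    expDecayPrimitive H₁ H₂ lam lhat t - expDecayPrimitive H₁ H₂ lam lhat t'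
      ≤ γd * exp (-lam * t) := by
  have hlhat : 0 < lhat := hlam.trans_le hlamlt
  have hfast := exp_neg_mul_sub_exp_neg_mul_le le_rfl hlamlt hlhat.le ht.1
  have hslow := exp_neg_mul_sub_exp_neg_mul_le (c := lam) hlamlt hlamlt hlhat.le ht.1
  rw [sub_self, zero_mul, exp_zero, mul_one] at hslow
  have hdelay : exp (lhat * (t - t')) ≤ exp (lhat * d) :=
    exp_le_exp.2 (mul_le_mul_of_nonneg_left (by linarith [ht.2]) hlhat.le)
  calc expDecayPrimitive H₁ H₂ lam lhat t - expDecayPrimitive H₁ H₂ lam lhat t'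
      = H₁ / lhat * (exp (-lhat * t') - exp (-lhat * t))
        + H₂ / lam * (exp (-lam * t') - exp (-lam * t)) := by
        unfold expDecayPrimitive; ring
    _ ≤ H₁ / lhat * (exp (-lam * t) * exp ((lam - lhat) * t') * (exp (lhat * (t - t')) - 1))
        + H₂ / lam * (exp (-lam * t) * (exp (lhat * (t - t')) - 1)) := by
        gcongr
    _ = exp (-lam * t) * ((H₂ / lam + H₁ / lhat * exp ((lam - lhat) * t'))
          * (exp (lhat * (t - t')) - 1)) := by ring
    _ ≤ exp (-lam * t) * ((H₂ / lam + H₁ / lhat * exp ((lam - lhat) * t'))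
          * (exp (lhat * d) - 1)) := by gcongr
    _ ≤ γd * exp (-lam * t) := by rw [mul_comm γd]; gcongr

theorem admissible_delay_bound_general
    (n : ℕ) (lam lhat H₁ H₂ γd t' : ℝ)
    (hlam : 0 < lam) (hlamlt : lam < lhat)
    (hH₁ : 0 < H₁) (hH₂ : 0 < H₂) (hγd : 0 < γd)
    (d : ℝ)
    (hd : d = (1 / lhat)
      * Real.log (1 + γd / (H₂ / lam + (H₁ / lhat) * Real.exp ((lam - lhat) * t'))))
    (e e' : ℝ → EuclideanSpace ℝ (Fin n))
    (hzero : e t' = 0)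
    (hderiv : ∀ s ∈ Set.Icc t' (t' + d),
      HasDerivWithinAt e (e' s) (Set.Icc t' (t' + d)) s)
    (hbound : ∀ s ∈ Set.Icc t' (t' + d),
      ‖e' s‖ ≤ H₁ * Real.exp (-lhat * s) + H₂ * Real.exp (-lam * s)) :
    0 < d ∧ ∀ t ∈ Set.Icc t' (t' + d), ‖e t‖ ≤ γd * Real.exp (-lam * t) := by
  have hlhat : 0 < lhat := hlam.trans hlamlt
  set K := H₂ / lam + H₁ / lhat * exp ((lam - lhat) * t')
  have hK : 0 < K := by positivity
  have hdK : K * (exp (lhat * d) - 1) = γd := by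
    rw [hd, ← mul_assoc, mul_one_div_cancel hlhat.ne', one_mul, exp_log (by positivity)]
    field_simp
    ring
  refine ⟨?_, fun t ht => ?_⟩
  · have := log_pos (lt_add_of_pos_right 1 (div_pos hγd hK))
    rw [hd]
    positivity
  · calc ‖e t‖
        ≤ ‖e t'‖ + (expDecayPrimitive H₁ H₂ lam lhat t - expDecayPrimitive H₁ H₂ lam lhat t') :=
          norm_le_norm_add_sub_of_norm_deriv_le hderiv
            (hasDerivAt_expDecayPrimitive hlam.ne' hlhat.ne') hbound t ht
      _ ≤ γd * exp (-lam * t) := by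
          rw [hzero, norm_zero, zero_add]
          exact expDecayPrimitive_sub_le hH₁.le hH₂.le hlam hlamlt.le hdK.le ht

/-- Any communication delay not exceeding
`d = (1/λ̂)·ln(1 + γ_d/(H₂/λ + (H₁/λ̂)e^{(λ-λ̂)t′}))` keeps the delay-induced state
error (zero at the broadcast instant `t′` and with derivative bounded by
`H₁ e^{-λ̂ s} + H₂ e^{-λ s}`) below `γ_d e^{-λ t}`; moreover `d > 0`. -/
theorem admissible_delay_bound
    (n : ℕ) (lam lhat H₁ H₂ γd t' : ℝ)
    (hlam : 0 < lam) (hlamlt : lam < lhat)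
    (hH₁ : 0 < H₁) (hH₂ : 0 < H₂) (hγd : 0 < γd) (ht' : 0 ≤ t')
    (d : ℝ)
    (hd : d = (1 / lhat)
      * Real.log (1 + γd / (H₂ / lam + (H₁ / lhat) * Real.exp ((lam - lhat) * t'))))
    (e e' : ℝ → EuclideanSpace ℝ (Fin n))
    (hzero : e t' = 0)
    (hderiv : ∀ s ∈ Set.Icc t' (t' + d),
      HasDerivWithinAt e (e' s) (Set.Icc t' (t' + d)) s)
    (hbound : ∀ s ∈ Set.Icc t' (t' + d),
      ‖e' s‖ ≤ H₁ * Real.exp (-lhat * s) + H₂ * Real.exp (-lam * s)) :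
    0 < d ∧ ∀ t ∈ Set.Icc t' (t' + d), ‖e t‖ ≤ γd * Real.exp (-lam * t) :=
  admissible_delay_bound_general n lam lhat H₁ H₂ γd t' hlam hlamlt hH₁ hH₂ hγd d hd e e' hzero
    hderiv hbound
end
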